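/- arXiv:1010.3349 — 3 statements merged into one kernel-verified Lean document; each statement's English description precedes it below -/
import Mathlib

section
/- Let A be an abelian variety over a nonarchimedean local field K of residue characteristic q, with n a positive integer. Then #(A(K)/nA(K)) = q^(dim(A)·ord_q(n)·[K:Q_q]) · #A(K)[n]. -/
section Aux

variable {q : ℕ} [Fact q.Prime]

/-- The index of `nℤ_q` in `ℤ_q` is `q ^ v_q(n)`. -/
lemma padic_nsmul_range_index (n : ℕ) (hn : 0 < n) :
    ((n • AddMonoidHom.id ℤ_[q]).range).index = q ^ padicValNat q n := by
  have hq : q.Prime := Fact.out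
  set v := padicValNat q n with hv
  set m := n / q ^ v with hm
  have hfac : n.factorization q = v := Nat.factorization_def n hq
  have hqm : q ^ v * m = n := by
    rw [hm, ← hfac]; exact Nat.ordProj_mul_ordCompl_eq_self n q
  have hndvd : ¬ q ∣ m := by
    rw [hm, ← hfac]; exact Nat.not_dvd_ordCompl hq hn.ne'
  have hmunit : IsUnit (m : ℤ_[q]) := by
    rw [PadicInt.isUnit_iff]
    refine le_antisymm (PadicInt.norm_le_one _) (not_lt.1 fun hlt => hndvd ?_)
    have : ‖((m : ℤ) : ℤ_[q])‖ < 1 := by push_cast; exact hlt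
    exact_mod_cast (PadicInt.norm_int_lt_one_iff_dvd (m : ℤ)).1 this
  have hassoc : Associated ((q : ℤ_[q]) ^ v) ((n : ℤ_[q])) := by
    refine ⟨hmunit.unit, ?_⟩
    rw [IsUnit.unit_spec]
    have := congrArg (fun k : ℕ => (k : ℤ_[q])) hqm
    push_cast at this
    exact this
  set f : ℤ_[q] →+ ZMod (q ^ v) :=
    AddMonoidHomClass.toAddMonoidHom (PadicInt.toZModPow (p := q) v) with hf
  have hrange : (n • AddMonoidHom.id ℤ_[q]).range = f.ker := by
    ext x
    have h1 : x ∈ (n • AddMonoidHom.id ℤ_[q]).range ↔ (n : ℤ_[q]) ∣ x := by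
      constructor
      · rintro ⟨y, rfl⟩
        exact ⟨y, by simp [nsmul_eq_mul]⟩
      · rintro ⟨c, rfl⟩
        exact ⟨c, by simp [nsmul_eq_mul]⟩
    have h2 : x ∈ f.ker ↔ (q : ℤ_[q]) ^ v ∣ x := by
      rw [AddMonoidHom.mem_ker, hf]
      show (PadicInt.toZModPow (p := q) v) x = 0 ↔ _
      rw [← RingHom.mem_ker, PadicInt.ker_toZModPow, Ideal.mem_span_singleton]
    rw [h1, h2, hassoc.dvd_iff_dvd_left]
  rw [hrange, AddSubgroup.index_ker]
  have hsurj : Function.Surjective f := ZMod.ringHom_surjective (PadicInt.toZModPow (p := q) v)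
  rw [AddMonoidHom.range_eq_top_of_surjective f hsurj]
  rw [Nat.card_congr AddSubgroup.topEquiv.toEquiv, Nat.card_zmod]

/-- Index is invariant under additive equivalences. -/
lemma index_map_addEquiv {A B : Type*} [AddGroup A] [AddGroup B] (e : A ≃+ B)
    (K : AddSubgroup A) : (K.map e.toAddMonoidHom).index = K.index := by
  rw [AddSubgroup.index_map,
    (AddMonoidHom.ker_eq_bot_iff e.toAddMonoidHom).mpr e.injective,
    AddMonoidHom.range_eq_top_of_surjective _ e.surjective,
    AddSubgroup.index_top, sup_bot_eq, mul_one]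

/-- `n • (ι → M)` is the product of the subgroups `n • M`. -/
lemma range_nsmul_pi {ι : Type*} {M : Type*} [AddCommGroup M] (n : ℕ) :
    ((n • AddMonoidHom.id (ι → M)).range)
      = AddSubgroup.pi Set.univ (fun _ : ι => (n • AddMonoidHom.id M).range) := by
  ext x
  rw [AddSubgroup.mem_pi]
  constructor
  · rintro ⟨y, rfl⟩ i _
    exact ⟨y i, rfl⟩
  · intro h
    choose y hy using fun i => h i (Set.mem_univ i)
    refine ⟨y, funext fun i => ?_⟩
    simpa using hy i

end Aux

/-- Lemma 2.7 (sizetorsors), group-theoretic form: if the `K`-points of a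
`g`-dimensional abelian variety over a nonarchimedean local field `K` of
residue characteristic `q` (a topological abelian group `G` containing an open
finite-index subgroup isomorphic to `ℤ_q^(g·[K:ℚ_q])`), then
`#(G/nG) = q^(g·ord_q(n)·[K:ℚ_q]) · #G[n]`. -/
theorem stmt_4 (q : ℕ) [Fact q.Prime] (g dK : ℕ) (hg : 0 < g) (hdK : 0 < dK)
    (G : Type) [AddCommGroup G] [TopologicalSpace G] [IsTopologicalAddGroup G]
    (H : AddSubgroup G) (hHopen : IsOpen (H : Set G))
    (hHindex : H.index ≠ 0)
    (e : H ≃+ (Fin (g * dK) → ℤ_[q]))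
    (n : ℕ) (hn : 0 < n) :
    Nat.card (G ⧸ (AddMonoidHom.range (n • AddMonoidHom.id G)))
      = q ^ (g * padicValNat q n * dK) * Nat.card {x : G // n • x = 0} := by
  classical
  set d := g * dK with hd
  set v := padicValNat q n with hv
  set φ := n • AddMonoidHom.id G with hφ
  have hφ_apply : ∀ x : G, φ x = n • x := fun x => rfl
  -- torsion-freeness of H
  have htf : ∀ x : H, n • x = 0 → x = 0 := by
    intro x hx
    apply e.injective
    have h0 : n • e x = 0 := by rw [← map_nsmul, hx, map_zero]
    rw [map_zero]
    funext i
    have : (n : ℤ_[q]) * (e x i) = 0 := by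
      have := congrFun h0 i
      simpa [nsmul_eq_mul] using this
    rcases mul_eq_zero.1 this with h | h
    · exact absurd h (by exact_mod_cast hn.ne')
    · exact h
  -- ker φ is disjoint from H
  have hdisj : Disjoint H φ.ker := by
    rw [AddSubgroup.disjoint_def]
    intro x hxH hxK
    have : n • (⟨x, hxH⟩ : H) = 0 := by
      apply Subtype.ext
      simpa [hφ_apply] using hxK
    simpa using congrArg Subtype.val (htf _ this)
  -- Step C : H.relIndex (H ⊔ ker φ) = #ker φ
  have hrelC : H.relIndex (H ⊔ φ.ker) = Nat.card φ.ker := by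
    rw [AddSubgroup.relIndex_sup_left, AddSubgroup.relIndex,
      AddSubgroup.addSubgroupOf_eq_bot.mpr hdisj, AddSubgroup.index_bot]
  have hC : Nat.card φ.ker * (H ⊔ φ.ker).index = H.index := by
    rw [← hrelC]; exact AddSubgroup.relIndex_mul_index le_sup_left
  -- Step B : index of nH in H equals q^(v*d)
  have hmapB : H.map φ ≤ H := by
    rintro x hx
    rw [AddSubgroup.mem_map] at hx
    obtain ⟨y, hy, rfl⟩ := hx
    rw [hφ_apply]
    exact AddSubgroup.nsmul_mem H hy n
  have hsubOf : (H.map φ).addSubgroupOf H = (n • AddMonoidHom.id H).range := by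
    ext x
    rw [AddSubgroup.mem_addSubgroupOf, AddSubgroup.mem_map]
    constructor
    · rintro ⟨y, hy, hxy⟩
      refine ⟨⟨y, hy⟩, Subtype.ext ?_⟩
      simpa [hφ_apply] using hxy
    · rintro ⟨⟨y, hy⟩, rfl⟩
      exact ⟨y, hy, by simp [hφ_apply]⟩
  have hmapEq : ((n • AddMonoidHom.id H).range.map e.toAddMonoidHom)
      = (n • AddMonoidHom.id (Fin d → ℤ_[q])).range := by
    ext z
    rw [AddSubgroup.mem_map]
    constructor
    · rintro ⟨w, ⟨x, rfl⟩, rfl⟩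
      exact ⟨e x, by simpa using (map_nsmul e x n).symm ▸ rfl⟩
    · rintro ⟨y, rfl⟩
      refine ⟨n • e.symm y, ⟨e.symm y, rfl⟩, ?_⟩
      show e (n • e.symm y) = n • y
      rw [map_nsmul, e.apply_symm_apply]
  have hrelB : (H.map φ).relIndex H = q ^ (v * d) := by
    rw [AddSubgroup.relIndex, hsubOf, ← index_map_addEquiv e, hmapEq, range_nsmul_pi,
      AddSubgroup.index_pi]
    simp [padic_nsmul_range_index n hn, ← hv, Finset.prod_const, ← pow_mul]
  have hB : q ^ (v * d) * H.index = (H.map φ).index := by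
    rw [← hrelB]; exact AddSubgroup.relIndex_mul_index hmapB
  have hBmap : (H.map φ).index = (H ⊔ φ.ker).index * φ.range.index :=
    AddSubgroup.index_map H φ
  -- arithmetic
  set S := (H ⊔ φ.ker).index with hS
  set R := φ.range.index with hR
  set Kc := Nat.card φ.ker with hKc
  have hSne : S ≠ 0 := fun h => hHindex (by rw [← hC, h, mul_zero])
  have key : S * (q ^ (v * d) * Kc) = S * R := by
    calc S * (q ^ (v * d) * Kc) = q ^ (v * d) * (Kc * S) := by ring
    _ = q ^ (v * d) * H.index := by rw [hC]
    _ = (H.map φ).index := hB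
    _ = S * R := hBmap
  have hmain : R = q ^ (v * d) * Kc :=
    (Nat.eq_of_mul_eq_mul_left (Nat.pos_of_ne_zero hSne) key).symm
  have hcardker : Nat.card {x : G // n • x = 0} = Kc := by
    rw [hKc]
    exact Nat.card_congr (Equiv.subtypeEquivRight fun x => by
      rw [AddMonoidHom.mem_ker, hφ_apply])
  have hexp : q ^ (g * padicValNat q n * dK) = q ^ (v * d) := by
    congr 1; rw [hv, hd]; ring
  calc Nat.card (G ⧸ φ.range) = R := rfl
    _ = q ^ (v * d) * Kc := hmain
    _ = q ^ (g * padicValNat q n * dK) * Nat.card {x : G // n • x = 0} := by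
        rw [hexp, hcardker]
end

section
/- Let G be a profinite abelian group containing an open subgroup of finite index isomorphic to Z_p^d. Then for any positive integer n, the quotient G/nG is finite and #(G/nG) = p^{d·v_p(n)} · #G[n], where G[n] is the n-torsion subgroup of G and v_p is the p-adic valuation. -/
lemma zp_dvd (p : ℕ) [Fact p.Prime] (n : ℕ) (hn : 0 < n) (x : ℤ_[p]) :
    (n : ℤ_[p]) ∣ x ↔ (p : ℤ_[p]) ^ (padicValNat p n) ∣ x := by
  have hp := Fact.out (p := p.Prime)
  set v := padicValNat p n with hv
  have hfac : n.factorization p = v := Nat.factorization_def n hp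
  have h1 : p ^ v * (n / p ^ v) = n := by rw [← hfac]; exact Nat.ordProj_mul_ordCompl_eq_self n p
  have h2 : ¬ p ∣ (n / p ^ v) := by rw [← hfac]; exact Nat.not_dvd_ordCompl hp hn.ne'
  have hu : IsUnit ((n / p ^ v : ℕ) : ℤ_[p]) := by
    rw [PadicInt.isUnit_iff]
    rcases lt_or_eq_of_le (PadicInt.norm_le_one ((n / p ^ v : ℕ) : ℤ_[p])) with h | h
    · exfalso
      have h3 : ‖(((n / p ^ v : ℕ) : ℤ) : ℤ_[p])‖ < 1 := by exact_mod_cast h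
      have := (PadicInt.norm_int_lt_one_iff_dvd ((n / p ^ v : ℕ) : ℤ)).mp h3
      exact h2 (by exact_mod_cast this)
    · exact h
  have hassoc : Associated ((p : ℤ_[p]) ^ v) (n : ℤ_[p]) := by
    refine ⟨hu.unit, ?_⟩
    rw [IsUnit.unit_spec, ← Nat.cast_pow, ← Nat.cast_mul, h1]
  exact (hassoc.dvd_iff_dvd_left).symm


/-- If `G` is a profinite abelian group containing an open finite-index
subgroup isomorphic to `ℤ_p^d`, then for every `n > 0` the quotient `G/nG` is
finite of cardinality `p^(d·v_p(n)) · #G[n]`. -/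
theorem stmt_5 (p : ℕ) [Fact p.Prime] (d : ℕ)
    (G : Type) [AddCommGroup G] [TopologicalSpace G] [IsTopologicalAddGroup G]
    [CompactSpace G] [TotallyDisconnectedSpace G]
    (H : AddSubgroup G) (hHopen : IsOpen (H : Set G)) (hHindex : H.index ≠ 0)
    (e : H ≃+ (Fin d → ℤ_[p]))
    (n : ℕ) (hn : 0 < n) :
    Finite (G ⧸ (AddMonoidHom.range (n • AddMonoidHom.id G))) ∧
      Nat.card (G ⧸ (AddMonoidHom.range (n • AddMonoidHom.id G)))
        = p ^ (d * padicValNat p n) * Nat.card {x : G // n • x = 0} := by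
  classical
  have hp := Fact.out (p := p.Prime)
  set v := padicValNat p n with hv
  set f : G →+ G := n • AddMonoidHom.id G with hf
  have hfapp : ∀ x : G, f x = n • x := fun x => rfl
  set A := f.range with hA
  set K := f.ker with hK
  have hmemK : ∀ x : G, x ∈ K ↔ n • x = 0 := fun x => Iff.rfl
  -- H is torsion-free
  have hHK : H ⊓ K = ⊥ := by
    rw [eq_bot_iff]
    intro x hx
    rw [AddSubgroup.mem_inf] at hx
    obtain ⟨hxH, hxK⟩ := hx
    have h0 : n • (⟨x, hxH⟩ : H) = 0 := Subtype.ext (by simpa using (hmemK x).mp hxK)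
    have h1 : n • e ⟨x, hxH⟩ = 0 := by rw [← map_nsmul, h0, map_zero]
    have h2 : e ⟨x, hxH⟩ = 0 := by
      funext i
      have : (n : ℤ_[p]) * e ⟨x, hxH⟩ i = 0 := by
        have := congrFun h1 i
        simpa [nsmul_eq_mul] using this
      rcases mul_eq_zero.mp this with h | h
      · exact absurd h (by exact_mod_cast hn.ne')
      · simpa using h
    have : (⟨x, hxH⟩ : H) = 0 := e.injective (by simpa using h2)
    simpa [AddSubgroup.mem_bot] using congrArg Subtype.val this
  -- K is finite
  haveI hGH : Finite (G ⧸ H) := Nat.finite_of_card_ne_zero (by rwa [← AddSubgroup.index_eq_card])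
  haveI hKfin : Finite K := by
    refine Finite.of_injective (fun k : K => QuotientAddGroup.mk (k : G) : K → G ⧸ H) ?_
    intro a b hab
    have : (a : G) - (b : G) ∈ H := by
      rwa [QuotientAddGroup.eq_iff_sub_mem] at hab
    have hk : (a : G) - (b : G) ∈ K := sub_mem a.2 b.2
    have : (a : G) - (b : G) ∈ H ⊓ K := AddSubgroup.mem_inf.mpr ⟨this, hk⟩
    rw [hHK, AddSubgroup.mem_bot, sub_eq_zero] at this
    exact Subtype.ext this
  set B := H.map f with hB
  have hBH : B ≤ H := by
    rintro x ⟨y, hy, rfl⟩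
    exact AddSubgroup.nsmul_mem H hy n
  have hBA : B ≤ A := by
    rintro x ⟨y, hy, rfl⟩
    exact ⟨y, rfl⟩
  haveI : NeZero (p ^ v) := ⟨pow_ne_zero _ hp.pos.ne'⟩
  -- Step 2 : B.relIndex H = (p^v)^d
  set ψ : ℤ_[p] →+ ZMod (p ^ v) := (PadicInt.toZModPow v).toAddMonoidHom with hψ
  have hψker : ∀ y : ℤ_[p], ψ y = 0 ↔ (n : ℤ_[p]) ∣ y := by
    intro y
    have : ψ y = 0 ↔ y ∈ RingHom.ker (PadicInt.toZModPow (p := p) v) := Iff.rfl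
    rw [this, PadicInt.ker_toZModPow, Ideal.mem_span_singleton]
    exact (zp_dvd p n hn y).symm
  set Φ : H →+ (Fin d → ZMod (p ^ v)) :=
    (AddMonoidHom.compLeft ψ (Fin d)).comp e.toAddMonoidHom with hΦ
  have hΦsurj : Function.Surjective Φ := by
    intro z
    refine ⟨e.symm (fun i => ((z i).val : ℤ_[p])), ?_⟩
    funext i
    show ψ (e (e.symm _) i) = z i
    rw [e.apply_symm_apply]
    show PadicInt.toZModPow v (((z i).val : ℕ) : ℤ_[p]) = z i
    rw [map_natCast]
    exact ZMod.natCast_rightInverse (z i)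
  have hΦker : Φ.ker = B.addSubgroupOf H := by
    ext h
    constructor
    · intro hh
      have hdvd : ∀ i, (n : ℤ_[p]) ∣ e h i := by
        intro i
        have : ψ (e h i) = 0 := congrFun (AddMonoidHom.mem_ker.mp hh) i
        exact (hψker _).mp this
      choose w hw using hdvd
      have hw' : n • (fun i => w i) = e h := by
        funext i
        simpa [nsmul_eq_mul, mul_comm] using (hw i).symm
      refine AddSubgroup.mem_addSubgroupOf.mpr ⟨(e.symm fun i => w i : H), ?_, ?_⟩
      · exact (e.symm _).2
      · have : (n • (e.symm fun i => w i) : H) = h := by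
          apply e.injective
          rw [map_nsmul, e.apply_symm_apply, hw']
        calc f ((e.symm fun i => w i : H) : G) = n • ((e.symm fun i => w i : H) : G) := rfl
          _ = ((n • (e.symm fun i => w i) : H) : G) := rfl
          _ = h := by rw [this]
    · intro hh
      obtain ⟨g, hg, hgh⟩ := AddSubgroup.mem_addSubgroupOf.mp hh
      have hgh' : n • (⟨g, hg⟩ : H) = h := Subtype.ext (by simpa [hfapp] using hgh)
      rw [AddMonoidHom.mem_ker]
      funext i
      have : e h = n • e ⟨g, hg⟩ := by rw [← map_nsmul, hgh']
      show ψ (e h i) = 0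
      rw [(hψker _)]
      refine ⟨e ⟨g, hg⟩ i, ?_⟩
      rw [this]
      simp [nsmul_eq_mul]
  have hrBH : B.relIndex H = (p ^ v) ^ d := by
    rw [AddSubgroup.relIndex, AddSubgroup.index_eq_card, ← hΦker]
    rw [Nat.card_congr (QuotientAddGroup.quotientKerEquivOfSurjective Φ hΦsurj).toEquiv]
    simp [Nat.card_pi, Nat.card_zmod]
  -- Step 3a : B.relIndex A = (H ⊔ K).index
  have hrBA : B.relIndex A = (H ⊔ K).index := by
    set φ : G →+ A ⧸ (B.addSubgroupOf A) :=
      (QuotientAddGroup.mk' (B.addSubgroupOf A)).comp f.rangeRestrict with hφ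
    have hφsurj : Function.Surjective φ :=
      (QuotientAddGroup.mk'_surjective _).comp f.rangeRestrict_surjective
    have hφker : φ.ker = H ⊔ K := by
      ext x
      rw [AddMonoidHom.mem_ker, hφ, AddMonoidHom.comp_apply,
        QuotientAddGroup.mk'_apply, QuotientAddGroup.eq_zero_iff]
      constructor
      · intro hx
        obtain ⟨g, hg, hgx⟩ := AddSubgroup.mem_addSubgroupOf.mp hx
        have hgx' : n • g = n • x := hgx
        refine AddSubgroup.mem_sup.mpr ⟨g, hg, x - g, ?_, by abel⟩
        rw [hmemK, smul_sub, hgx', sub_self]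
      · intro hx
        obtain ⟨y, hy, z, hz, hyz⟩ := AddSubgroup.mem_sup.mp hx
        refine AddSubgroup.mem_addSubgroupOf.mpr ⟨y, hy, ?_⟩
        have hz0 : n • z = 0 := (hmemK z).mp hz
        show f y = f x
        rw [hfapp, hfapp, ← hyz, smul_add, hz0, add_zero]
    rw [AddSubgroup.relIndex, AddSubgroup.index_eq_card, AddSubgroup.index_eq_card, ← hφker]
    exact (Nat.card_congr (QuotientAddGroup.quotientKerEquivOfSurjective φ hφsurj).toEquiv).symm
  -- Step 3b : (H ⊔ K).index * Nat.card K = H.index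
  have hHsubK : H.addSubgroupOf K = ⊥ := by
    rw [eq_bot_iff]
    intro x hx
    have : (x : G) ∈ H ⊓ K := AddSubgroup.mem_inf.mpr ⟨AddSubgroup.mem_addSubgroupOf.mp hx, x.2⟩
    rw [hHK, AddSubgroup.mem_bot] at this
    simpa [AddSubgroup.mem_bot] using Subtype.ext this
  have h3b : Nat.card K * (H ⊔ K).index = H.index := by
    have := AddSubgroup.relIndex_mul_index (le_sup_left : H ≤ H ⊔ K)
    rwa [AddSubgroup.relIndex_sup_left, AddSubgroup.relIndex, hHsubK,
      AddSubgroup.index_bot] at this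
  -- combine
  have e1 : B.relIndex A * A.index = B.index := AddSubgroup.relIndex_mul_index hBA
  have e2 : B.relIndex H * H.index = B.index := AddSubgroup.relIndex_mul_index hBH
  have hKcard : Nat.card {x : G // n • x = 0} = Nat.card K :=
    Nat.card_congr (Equiv.subtypeEquivRight fun x => ((hmemK x).symm))
  have hsupne : (H ⊔ K).index ≠ 0 := by
    intro h0
    rw [h0, mul_zero] at h3b
    exact hHindex h3b.symm
  have key : A.index = p ^ (d * v) * Nat.card K := by
    have hmain : (H ⊔ K).index * A.index = (H ⊔ K).index * (p ^ (d * v) * Nat.card K) := by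
      calc (H ⊔ K).index * A.index = B.relIndex A * A.index := by rw [hrBA]
        _ = B.index := e1
        _ = B.relIndex H * H.index := e2.symm
        _ = (p ^ v) ^ d * (Nat.card K * (H ⊔ K).index) := by rw [hrBH, h3b]
        _ = (H ⊔ K).index * (p ^ (d * v) * Nat.card K) := by
            rw [← pow_mul, Nat.mul_comm v d]; ring
    exact Nat.eq_of_mul_eq_mul_left (Nat.pos_of_ne_zero hsupne) hmain
  have hAcard : Nat.card (G ⧸ A) = A.index := (AddSubgroup.index_eq_card A).symm
  have hKne : Nat.card K ≠ 0 := Nat.card_ne_zero.mpr ⟨⟨0, K.zero_mem⟩, hKfin⟩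
  constructor
  · refine Nat.finite_of_card_ne_zero ?_
    rw [hAcard, key]
    exact mul_ne_zero (pow_ne_zero _ hp.pos.ne') hKne
  · rw [hAcard, key, hKcard]
end

section
/- Let k be a number field, A/k a strongly principally polarized abelian variety whose Néron–Severi group is a trivial Galois module, p a prime, and S a finite set of places. Suppose: (a) for each N, there exist infinitely many places v ∉ S where the local obstruction map Δ_{p,v} : H¹(k_v, A[p]) → Br(k_v) is nonzero; (b) weak weak approximation holds for H¹(k, A[p]) outside S; (c) Clark's obstruction theorem (a torsor all of whose Kummer lifts have nonzero obstruction cannot be split by a degree-p extension). Then there exists an infinite sequence of torsors V_0 = A, V_1, V_2, ... in H¹(k, A)[p], each locally trivial outside S, such that for all i ≠ j the difference V_i − V_j cannot be split by any field extension of degree p, and has index > p. -/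
theorem exists_extend' {T P : Type} {H : P → Type} [∀ p, Inhabited (H p)]
    {f : T → P} (hf : Function.Injective f) (val : ∀ t, H (f t)) :
    ∃ g : ∀ p, H p, ∀ t, g (f t) = val t := by
  classical
  refine ⟨fun p => if h : ∃ t, f t = p then h.choose_spec ▸ val h.choose else default, ?_⟩
  intro t
  have h : ∃ t', f t' = f t := ⟨t, rfl⟩
  have ht : h.choose = t := hf h.choose_spec
  simp only [dif_pos h]
  have key : ∀ (t' : T) (e : f t' = f t), t' = t → e ▸ val t' = val t := by
    rintro t' e rfl
    rfl
  exact key h.choose h.choose_spec ht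


/-- Theorem 4.1 (PIdifs) for `n = p`, formalized conditionally. The data:
`HAn` models `H¹(k, A[p])`, `HA` models `H¹(k, A)` with Kummer map `κ`
surjecting onto the `p`-torsion; `Places` is the set of places of `k` with a
finite subset `S`; `Hloc v` models `H¹(k_v, A[p])` with localization `locn`,
`HlocA v` models `H¹(k_v, A)` with localization `locA`; `Δ v` is the local
obstruction map into `Br v = Br(k_v)`; `splits V d` means `V` is split by some
field extension of degree `d`, and `index V` is the index of the torsor `V`.
Hypotheses: (a) infinitely many places outside `S` have nonzero local
obstruction map; (b) weak weak approximation for `H¹(k, A[p])` outside `S`,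
producing classes whose image in `H¹(k, A)` is locally trivial outside `S`;
(c) Clark's obstruction theorem. Conclusion: there is a sequence of torsors
`V 0 = 0, V 1, V 2, …` of period dividing `p`, each locally trivial outside
`S`, whose pairwise differences are not split by any degree-`p` extension and
have index `> p`. -/
theorem stmt_10 (p : ℕ) (hp : p.Prime)
    (HAn HA : Type) [AddCommGroup HAn] [AddCommGroup HA]
    (κ : HAn →+ HA)
    (hκsurj : ∀ V : HA, p • V = 0 → ∃ ξ, κ ξ = V)
    (hκtors : ∀ ξ : HAn, p • κ ξ = 0)
    (MW : Type) [AddCommGroup MW] [Finite MW] (q : MW →+ HAn)  -- A(k)/pA(k), Mordell–Weil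
    (hKummerLifts : ∀ ξ ξ' : HAn, κ ξ = κ ξ' → ∃ R : MW, ξ' = ξ + q R)
    (Places : Type) (S : Set Places) (hS : S.Finite)
    (Hloc : Places → Type) [∀ v, AddCommGroup (Hloc v)]
    (locn : ∀ v, HAn →+ Hloc v)
    (HlocA : Places → Type) [∀ v, AddCommGroup (HlocA v)]
    (locA : ∀ v, HA →+ HlocA v)
    (Br : Places → Type) [∀ v, AddCommGroup (Br v)]
    (Δ : ∀ v, Hloc v → Br v)
    (splits : HA → ℕ → Prop) (index : HA → ℕ)
    -- (a) local obstruction maps are nonzero at infinitely many places outside S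
    (ha : {v : Places | v ∉ S ∧ ∃ x : Hloc v, Δ v x ≠ 0}.Infinite)
    -- (b) weak weak approximation outside S
    (hb : ∀ (F : Finset Places), (∀ v ∈ F, v ∉ S) →
      ∀ target : ∀ v : Places, Hloc v,
        ∃ ξ : HAn, (∀ v ∈ F, locn v ξ = target v) ∧
          ∀ v ∉ S, locA v (κ ξ) = 0)
    -- (c) Clark's obstruction theorem
    (hc : ∀ V : HA, p • V = 0 →
      (∀ ξ : HAn, κ ξ = V → ∃ v : Places, Δ v (locn v ξ) ≠ 0) →
      ¬ splits V p ∧ index V > p) :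
    ∃ V : ℕ → HA, V 0 = 0 ∧
      (∀ i, p • V i = 0) ∧
      (∀ i, ∀ v ∉ S, locA v (V i) = 0) ∧
      (∀ i j, i ≠ j → ¬ splits (V i - V j) p ∧ index (V i - V j) > p) := by
  classical
  haveI : Fintype MW := Fintype.ofFinite MW
  haveI : ∀ v, Inhabited (Hloc v) := fun v => ⟨0⟩
  -- Key step lemma
  have key : ∀ (n : ℕ) (g : Fin n → HAn), ∃ x : HAn,
      (∀ v ∉ S, locA v (κ x) = 0) ∧ (n = 0 → x = 0) ∧
      ∀ (j : Fin n) (R : MW),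
        (∃ v, Δ v (locn v (x - g j + q R)) ≠ 0) ∧
        (∃ v, Δ v (locn v (g j - x + q R)) ≠ 0) := by
    intro n g
    rcases Nat.eq_zero_or_pos n with hn | hn
    · subst hn
      exact ⟨0, fun v _ => by simp, fun _ => rfl, fun j => j.elim0⟩
    · -- an injective choice of places outside S with nonzero obstruction
      let T := Fin n × MW × Bool
      let embℕ : T ↪ ℕ := (Fintype.equivFin T).toEmbedding.trans Fin.valEmbedding
      let plcS : ℕ ↪ {v : Places | v ∉ S ∧ ∃ x : Hloc v, Δ v x ≠ 0} := ha.natEmbedding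
      let plc : T ↪ Places := embℕ.trans (plcS.trans (Function.Embedding.subtype _))
      have hplc : ∀ t : T, plc t ∉ S ∧ ∃ x : Hloc (plc t), Δ (plc t) x ≠ 0 := fun t =>
        (plcS (embℕ t)).2
      choose x hx using fun t => (hplc t).2
      obtain ⟨target, htarget⟩ := exists_extend' plc.injective
        (fun t : T => cond t.2.2
          (x t + locn (plc t) (g t.1) - locn (plc t) (q t.2.1))
          (locn (plc t) (g t.1) + locn (plc t) (q t.2.1) - x t))
      obtain ⟨ξ, hξ1, hξ2⟩ := hb (Finset.univ.image plc)
        (by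
          intro v hv
          simp only [Finset.mem_image, Finset.mem_univ, true_and] at hv
          obtain ⟨t, ht⟩ := hv
          exact ht ▸ (hplc t).1) target
      refine ⟨ξ, hξ2, fun h0 => absurd h0 hn.ne', ?_⟩
      intro j R
      constructor
      · refine ⟨plc (j, R, true), ?_⟩
        have hv : locn (plc (j, R, true)) ξ = target (plc (j, R, true)) :=
          hξ1 _ (Finset.mem_image_of_mem _ (Finset.mem_univ _))
        have heq : locn (plc (j, R, true)) (ξ - g j + q R) = x (j, R, true) := by
          rw [map_add, map_sub, hv, htarget (j, R, true)]
          simp only [cond_true]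
          abel
        rw [heq]
        exact hx (j, R, true)
      · refine ⟨plc (j, R, false), ?_⟩
        have hv : locn (plc (j, R, false)) ξ = target (plc (j, R, false)) :=
          hξ1 _ (Finset.mem_image_of_mem _ (Finset.mem_univ _))
        have heq : locn (plc (j, R, false)) (g j - ξ + q R) = x (j, R, false) := by
          rw [map_add, map_sub, hv, htarget (j, R, false)]
          simp only [cond_false]
          abel
        rw [heq]
        exact hx (j, R, false)
  choose step hstep using key
  let chain : ∀ n : ℕ, Fin n → HAn := fun n =>
    Nat.rec (motive := fun n => Fin n → HAn) Fin.elim0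
      (fun m gm => Fin.snoc gm (step m gm)) n
  let ξ : ℕ → HAn := fun i => step i (chain i)
  have hchain : ∀ m (i : Fin m), chain m i = ξ i.val := by
    intro m
    induction m with
    | zero => exact fun i => i.elim0
    | succ m ih =>
      intro i
      refine Fin.lastCases ?_ ?_ i
      · have : chain (m + 1) (Fin.last m) = Fin.snoc (α := fun _ => HAn) (chain m) (step m (chain m)) (Fin.last m) := rfl
        rw [this, Fin.snoc_last]
        rfl
      · intro i
        have : chain (m + 1) (Fin.castSucc i) = Fin.snoc (α := fun _ => HAn) (chain m) (step m (chain m)) (Fin.castSucc i) := rfl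
        rw [this, Fin.snoc_castSucc, Fin.coe_castSucc]
        exact ih i
  refine ⟨fun i => κ (ξ i), ?_, fun i => hκtors _,
    fun i v hv => (hstep i (chain i)).1 v hv, ?_⟩
  · show κ (ξ 0) = 0
    have h0 : ξ 0 = 0 := (hstep 0 (chain 0)).2.1 rfl
    rw [h0, map_zero]
  · intro i j hij
    have htors : p • (κ (ξ i) - κ (ξ j)) = 0 := by
      rw [← map_sub]; exact hκtors _
    refine hc _ htors ?_
    intro ξ' hξ'
    have hκeq : κ (ξ i - ξ j) = κ ξ' := by rw [hξ', map_sub]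
    obtain ⟨R, hR⟩ := hKummerLifts _ _ hκeq
    rcases lt_or_gt_of_ne hij with h | h
    · obtain ⟨v, hv⟩ := ((hstep j (chain j)).2.2 ⟨i, h⟩ R).2
      rw [hchain j ⟨i, h⟩] at hv
      exact ⟨v, hR ▸ hv⟩
    · obtain ⟨v, hv⟩ := ((hstep i (chain i)).2.2 ⟨j, h⟩ R).1
      rw [hchain i ⟨j, h⟩] at hv
      exact ⟨v, hR ▸ hv⟩
end
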